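/- Being coarsely doubling is invariant under coarse equivalence: if f : X → Y is a coarse equivalence and Y is coarsely doubling, then X is coarsely doubling. -/

import Mathlib

/-!
Iterating the doubling condition of `Y`, every ball of `Y`, of any radius, is covered by
boundedly many balls of a fixed radius `s` above the doubling threshold. Given `r` large enough
that `ρ₁ r ≥ 2 s`, the `f`-image of a `2r`-ball of `X` lies in a `Y`-ball of radius about
`ρ₂ (2r)`; choosing one preimage point in each of the covering `s`-balls that meets this image
gives boundedly many points of `X`, and the lower control `ρ₁` shows that the `r`-balls around
them cover the `2r`-ball.
-/

open Filter

/-- `X` is coarsely doubling. -/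
def CoarselyDoubling (X : Type*) [MetricSpace X] : Prop :=
  ∃ M : ℝ, 0 < M ∧ ∀ r : ℝ, M < r → ∃ n : ℕ, ∀ x : X, ∃ F : Finset X,
    F.card ≤ n ∧ Metric.ball x (2 * r) ⊆ ⋃ y ∈ F, Metric.ball y r

/-- `f : X → Y` is a coarse embedding. -/
def CoarseEmbedding {X Y : Type*} [MetricSpace X] [MetricSpace Y] (f : X → Y) : Prop :=
  ∃ ρ₁ ρ₂ : ℝ → ℝ, Monotone ρ₁ ∧ Monotone ρ₂ ∧
    Tendsto ρ₁ atTop atTop ∧ Tendsto ρ₂ atTop atTop ∧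
    ∀ x y : X, ρ₁ (dist x y) ≤ dist (f x) (f y) ∧ dist (f x) (f y) ≤ ρ₂ (dist x y)

def BallsUniformlyCovered (X : Type*) [MetricSpace X] (R r : ℝ) : Prop :=
  ∃ n : ℕ, ∀ x : X, ∃ F : Finset X, F.card ≤ n ∧ Metric.ball x R ⊆ ⋃ y ∈ F, Metric.ball y r

namespace BallsUniformlyCovered

variable {X : Type*} [MetricSpace X]

theorem refl (r : ℝ) : BallsUniformlyCovered X r r :=
  ⟨1, fun x => ⟨{x}, by simp, by simp⟩⟩

theorem mono {R R' r r' : ℝ} (h : BallsUniformlyCovered X R r) (hR : R' ≤ R) (hr : r ≤ r') :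
    BallsUniformlyCovered X R' r' := by
  obtain ⟨n, hn⟩ := h
  refine ⟨n, fun x => ?_⟩
  obtain ⟨F, hFcard, hFcover⟩ := hn x
  refine ⟨F, hFcard, (Metric.ball_subset_ball hR).trans (hFcover.trans ?_)⟩
  exact Set.iUnion₂_mono fun y _ => Metric.ball_subset_ball hr

theorem trans {R r s : ℝ} (h₁ : BallsUniformlyCovered X R r) (h₂ : BallsUniformlyCovered X r s) :
    BallsUniformlyCovered X R s := by
  classical
  obtain ⟨n, hn⟩ := h₁
  obtain ⟨m, hm⟩ := h₂
  choose G hGcard hGcover using hm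
  refine ⟨n * m, fun x => ?_⟩
  obtain ⟨F, hFcard, hFcover⟩ := hn x
  refine ⟨F.biUnion G, ?_, fun p hp => ?_⟩
  · calc (F.biUnion G).card ≤ ∑ y ∈ F, (G y).card := Finset.card_biUnion_le
      _ ≤ F.card * m := Finset.sum_le_card_nsmul _ _ _ fun y _ => hGcard y
      _ ≤ n * m := Nat.mul_le_mul_right _ hFcard
  · obtain ⟨y, hy, hpy⟩ := Set.mem_iUnion₂.1 (hFcover hp)
    obtain ⟨z, hz, hpz⟩ := Set.mem_iUnion₂.1 (hGcover y hpy)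
    exact Set.mem_iUnion₂.2 ⟨z, Finset.mem_biUnion.2 ⟨y, hy, hz⟩, hpz⟩

theorem of_map {Y : Type*} [MetricSpace Y] (f : X → Y) {R r R' s : ℝ}
    (hupper : ∀ x x', dist x x' < R → dist (f x) (f x') < R')
    (hlower : ∀ x x', dist (f x) (f x') < 2 * s → dist x x' < r)
    (h : BallsUniformlyCovered Y R' s) : BallsUniformlyCovered X R r := by
  classical
  obtain ⟨n, hn⟩ := h
  refine ⟨n, fun x => ?_⟩
  obtain ⟨G, hGcard, hGcover⟩ := hn (f x)
  let pick : Y → X := fun z =>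
    if hz : ∃ x', x' ∈ Metric.ball x R ∧ f x' ∈ Metric.ball z s then hz.choose else x
  refine ⟨G.image pick, Finset.card_image_le.trans hGcard, fun x' hx' => ?_⟩
  obtain ⟨z, hz, hx'z⟩ := Set.mem_iUnion₂.1 (hGcover (hupper x' x hx'))
  have hpick : f (pick z) ∈ Metric.ball z s := by
    have hex : ∃ x'', x'' ∈ Metric.ball x R ∧ f x'' ∈ Metric.ball z s := ⟨x', hx', hx'z⟩
    simpa only [pick, dif_pos hex] using hex.choose_spec.2
  refine Set.mem_iUnion₂.2 ⟨pick z, Finset.mem_image_of_mem pick hz, hlower x' (pick z) ?_⟩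
  calc dist (f x') (f (pick z)) ≤ dist (f x') z + dist z (f (pick z)) := dist_triangle _ _ _
    _ < s + s := add_lt_add hx'z (by rwa [dist_comm])
    _ = 2 * s := by ring

end BallsUniformlyCovered

theorem CoarselyDoubling.ballsUniformlyCovered {X : Type*} [MetricSpace X]
    (h : CoarselyDoubling X) : ∃ M : ℝ, ∀ R r : ℝ, M < r → BallsUniformlyCovered X R r := by
  obtain ⟨M, hM0, hM⟩ := h
  refine ⟨M, fun R r hr => ?_⟩
  have hr0 : 0 < r := hM0.trans hr
  have hpow : ∀ k : ℕ, BallsUniformlyCovered X (2 ^ k * r) r := by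
    intro k
    induction k with
    | zero => simpa only [pow_zero, one_mul] using BallsUniformlyCovered.refl r
    | succ k ih =>
      have hk : M < 2 ^ k * r :=
        hr.trans_le (le_mul_of_one_le_left hr0.le (one_le_pow₀ one_le_two))
      have hdouble : BallsUniformlyCovered X (2 ^ (k + 1) * r) (2 ^ k * r) := by
        rw [pow_succ, mul_comm _ (2 : ℝ), mul_assoc]
        exact hM _ hk
      exact hdouble.trans ih
  obtain ⟨k, hk⟩ := pow_unbounded_of_one_lt (R / r) (one_lt_two (α := ℝ))
  exact (hpow k).mono ((div_lt_iff₀ hr0).1 hk).le le_rfl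

theorem stmt_14_general {X Y : Type*} [MetricSpace X] [MetricSpace Y] (f : X → Y)
    (hf : CoarseEmbedding f)
    (hY : CoarselyDoubling Y) : CoarselyDoubling X := by
  obtain ⟨ρ₁, ρ₂, hρ₁, hρ₂, hρ₁_tendsto, -, hρ⟩ := hf
  obtain ⟨M, hM⟩ := hY.ballsUniformlyCovered
  obtain ⟨R₀, hR₀⟩ := (hρ₁_tendsto.eventually_gt_atTop (2 * M)).exists_forall_of_atTop
  refine ⟨max R₀ 1, lt_max_of_lt_right one_pos, fun r hr => ?_⟩
  have hMs : M < ρ₁ r / 2 := by linarith [hR₀ r (le_max_left _ _ |>.trans hr.le)]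
  refine (hM (ρ₂ (2 * r) + 1) _ hMs).of_map f (fun x x' hxx' => ?_) (fun x x' hxx' => ?_)
  · linarith [(hρ x x').2, hρ₂ hxx'.le]
  · by_contra! hrx
    linarith [hρ₁ hrx, (hρ x x').1]

/-- Corollary 5.11: being coarsely doubling is a coarse invariant:
if `f : X → Y` is a coarse equivalence (a coarse embedding with coarsely dense
image) and `Y` is coarsely doubling, then `X` is coarsely doubling. -/
theorem stmt_14 {X Y : Type*} [MetricSpace X] [MetricSpace Y] (f : X → Y)
    (hf : CoarseEmbedding f) (hdense : ∃ c : ℝ, 0 < c ∧ ∀ y : Y, ∃ x : X, dist y (f x) < c)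
    (hY : CoarselyDoubling Y) : CoarselyDoubling X :=
  stmt_14_general f hf hY
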